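/- arXiv:1001.2026 — 4 statements merged into one kernel-verified Lean document; each statement's English description precedes it below -/
import Mathlib

section
/- Let X be a complex separable infinite-dimensional Banach space and let T be a bounded hypercyclic operator on X such that the linear span of the eigenvectors of T associated to eigenvalues of modulus 1 is dense in X. Then for every finite subset F of σ_p(T)∩𝕋, the linear span of ⋃_{λ ∈ 𝕋∖F} ker(T − λ) is dense in X. -/
open MeasureTheory Filter Topology

open scoped Classical in
/-- Lower density of a set of natural numbers. -/
noncomputable def lowerDensity (A : Set ℕ) : ℝ :=
  Filter.atTop.liminf fun N : ℕ =>
    (((Finset.range N).filter (fun n => n ∈ A)).card : ℝ) / (N : ℝ)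

/-- `x` is a frequently hypercyclic vector for `T`. -/
def FreqHCVector {X : Type*} [NormedAddCommGroup X] [NormedSpace ℂ X]
    (T : X →L[ℂ] X) (x : X) : Prop :=
  ∀ U : Set X, IsOpen U → U.Nonempty → 0 < lowerDensity {n : ℕ | (T ^ n) x ∈ U}

/-- `T` is frequently hypercyclic. -/
def FrequentlyHypercyclic {X : Type*} [NormedAddCommGroup X] [NormedSpace ℂ X]
    (T : X →L[ℂ] X) : Prop :=
  ∃ x : X, FreqHCVector T x

/-- `T` is hypercyclic. -/
def Hypercyclic {X : Type*} [NormedAddCommGroup X] [NormedSpace ℂ X]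
    (T : X →L[ℂ] X) : Prop :=
  ∃ x : X, Dense (Set.range fun n : ℕ => (T ^ n) x)

/-- `T` has a perfectly spanning set of eigenvectors associated to unimodular
eigenvalues: there is a continuous (atomless) probability measure `σ` on the unit
circle such that whenever `A` is a measurable subset of the circle with `σ A = 1`,
the span of the eigenspaces `ker (T - c)`, `c ∈ A`, is dense in `X`. -/
def PerfectlySpanning {X : Type*} [NormedAddCommGroup X] [NormedSpace ℂ X]
    (T : X →L[ℂ] X) : Prop :=
  ∃ σ : Measure ℂ, IsProbabilityMeasure σ ∧ (∀ c : ℂ, σ {c} = 0) ∧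
    σ {c : ℂ | ‖c‖ = 1} = 1 ∧
    ∀ A : Set ℂ, A ⊆ {c : ℂ | ‖c‖ = 1} → MeasurableSet A → σ A = 1 →
      Dense (Submodule.span ℂ (⋃ c ∈ A, {x : X | T x = c • x}) : Set X)

/-!
If `T` is hypercyclic with dense orbit `(Tⁿ x)`, a continuous functional `f` with
`f ∘ T = c • f` would map that orbit onto the sequence `cⁿ f(x)`, which is never dense in `ℂ`;
by Hahn–Banach, every `T - c`, and hence every nonzero polynomial in `T`, has dense range.
The polynomial `p = ∏_{c ∈ F} (X - c)` kills the eigenvectors with eigenvalues in `F` and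
rescales the others, so `p(T)` maps the dense span of all unimodular eigenvectors into the span
of those with eigenvalues outside `F`, which is therefore dense.
-/

section

open Polynomial

theorem ContinuousLinearMap.denseRange_of_forall_dual_comp_eq_zero
    {𝕜 E F : Type*} [RCLike 𝕜] [AddCommGroup E] [Module 𝕜 E] [TopologicalSpace E]
    [NormedAddCommGroup F] [NormedSpace 𝕜 F] {S : E →L[𝕜] F}
    (h : ∀ f : StrongDual 𝕜 F, f.comp S = 0 → f = 0) : DenseRange S := by
  by_contra hS
  obtain ⟨x, hx⟩ : ∃ x, x ∉ closure (Set.range S) := by simpa [DenseRange, Dense] using hS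
  let W := (LinearMap.range (S : E →ₗ[𝕜] F)).topologicalClosure
  have hW : IsClosed (W : Set F) := Submodule.isClosed_topologicalClosure _
  obtain ⟨g, hgx⟩ := SeparatingDual.exists_ne_zero (R := 𝕜) (x := W.mkQ x) <| by
    rwa [ne_eq, Submodule.mkQ_apply, Submodule.Quotient.mk_eq_zero, ← SetLike.mem_coe,
      Submodule.topologicalClosure_coe, LinearMap.coe_range]
  refine hgx (DFunLike.congr_fun (h (g.comp W.mkQL) ?_) x)
  ext y
  have hSy : S y ∈ W :=
    Submodule.le_topologicalClosure _ (LinearMap.mem_range_self (S : E →ₗ[𝕜] F) y)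
  simp [(Submodule.Quotient.mk_eq_zero W).2 hSy]

theorem not_denseRange_pow_mul {𝕜 : Type*} [NontriviallyNormedField 𝕜] (c z : 𝕜) :
    ¬ DenseRange fun n : ℕ => c ^ n * z := by
  intro hd
  by_cases hc : ‖c‖ ≤ 1 ∨ z = 0
  · obtain ⟨n, hn⟩ := hd.exists_mem_open (isOpen_lt continuous_const continuous_norm)
      (NormedField.exists_lt_norm 𝕜 ‖z‖)
    have : ‖c ^ n * z‖ ≤ ‖z‖ := by
      rcases hc with hc | rfl
      · simpa [norm_mul, norm_pow] using
          mul_le_of_le_one_left (norm_nonneg z) (pow_le_one₀ (norm_nonneg c) hc)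
      · simp
    exact (lt_of_lt_of_le hn this).false
  · push Not at hc
    obtain ⟨n, hn⟩ := hd.exists_mem_open Metric.isOpen_ball
      ⟨0, Metric.mem_ball_self (norm_pos_iff.2 hc.2)⟩
    have : ‖z‖ ≤ ‖c ^ n * z‖ := by
      simpa [norm_mul, norm_pow] using
        le_mul_of_one_le_left (norm_nonneg z) (one_le_pow₀ hc.1.le)
    exact (lt_of_lt_of_le (mem_ball_zero_iff.1 hn) this).false

theorem ContinuousLinearMap.aeval_apply_of_apply_eq_smul {R M : Type*} [CommRing R]
    [AddCommGroup M] [Module R M] [TopologicalSpace M] [IsTopologicalAddGroup M]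
    [ContinuousConstSMul R M] (T : M →L[R] M) (p : R[X]) {c : R} {v : M}
    (hv : T v = c • v) : aeval T p v = p.eval c • v := by
  let φ : (M →L[R] M) →ₐ[R] Module.End R M :=
    { ContinuousLinearMap.toLinearMapRingHom with commutes' := fun _ => rfl }
  exact (congr($(aeval_algHom_apply φ T p) v)).symm.trans
    (Module.End.aeval_apply_of_mem_apply_eq_smul hv)

variable {E : Type*} [NormedAddCommGroup E] [NormedSpace ℂ E]

theorem Hypercyclic.denseRange_sub_smul_one {T : E →L[ℂ] E} (hT : Hypercyclic T) (c : ℂ) :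
    DenseRange (T - c • (1 : E →L[ℂ] E)) := by
  refine ContinuousLinearMap.denseRange_of_forall_dual_comp_eq_zero fun f hf => ?_
  obtain ⟨x, hx⟩ := hT
  have hfT : ∀ y, f (T y) = c * f y := fun y => by
    simpa [sub_eq_zero] using DFunLike.congr_fun hf y
  have horbit : ∀ n : ℕ, f (T^[n] x) = c ^ n * f x := by
    intro n
    induction n with
    | zero => simp
    | succ n ih => rw [Function.iterate_succ_apply', hfT, ih, pow_succ', mul_assoc]
  by_contra hf0
  have hfsurj : Function.Surjective f :=
    LinearMap.surjective_iff_ne_zero.2 (fun h => hf0 (ContinuousLinearMap.coe_injective h))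
  have hdense := hfsurj.denseRange.comp hx f.continuous
  exact not_denseRange_pow_mul c (f x) (by simpa [Function.comp_def, horbit] using hdense)

theorem Hypercyclic.denseRange_aeval {T : E →L[ℂ] E} (hT : Hypercyclic T) {p : ℂ[X]}
    (hp : p ≠ 0) : DenseRange (aeval T p) := by
  have hlinear : ∀ s : Multiset ℂ, DenseRange (aeval T (s.map fun a => X - C a).prod) := by
    intro s
    induction s using Multiset.induction_on with
    | empty => simpa using denseRange_id
    | cons a s ih =>
      rw [Multiset.map_cons, Multiset.prod_cons, map_mul]
      have ha : DenseRange (aeval T (X - C a)) := by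
        simpa [Algebra.algebraMap_eq_smul_one] using hT.denseRange_sub_smul_one a
      exact ha.comp ih (ContinuousLinearMap.continuous _)
  have hlead : DenseRange (aeval T (C p.leadingCoeff)) := by
    refine Function.Surjective.denseRange fun y => ⟨p.leadingCoeff⁻¹ • y, ?_⟩
    simp [Algebra.algebraMap_eq_smul_one, smul_smul, hp]
  rw [← C_leadingCoeff_mul_prod_multiset_X_sub_C (IsAlgClosed.card_roots_eq_natDegree (p := p)),
    map_mul]
  exact hlead.comp (hlinear _) (ContinuousLinearMap.continuous _)

theorem ContinuousLinearMap.mapsTo_aeval_span_eigenvectors (T : E →L[ℂ] E) {p : ℂ[X]}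
    (A F : Set ℂ) (hpF : ∀ c ∈ F, p.eval c = 0) :
    Set.MapsTo (aeval T p) (Submodule.span ℂ (⋃ c ∈ A, {x : E | T x = c • x}))
      (Submodule.span ℂ (⋃ c ∈ A \ F, {x : E | T x = c • x})) := by
  have : Submodule.span ℂ (⋃ c ∈ A, {x : E | T x = c • x}) ≤
      (Submodule.span ℂ (⋃ c ∈ A \ F, {x : E | T x = c • x})).comap
        (aeval T p : E →ₗ[ℂ] E) := by
    refine Submodule.span_le.2 fun v hv => ?_
    obtain ⟨c, hcA, hv⟩ := Set.mem_iUnion₂.1 hv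
    rw [SetLike.mem_coe, Submodule.mem_comap, ContinuousLinearMap.coe_coe,
      T.aeval_apply_of_apply_eq_smul p hv]
    by_cases hcF : c ∈ F
    · simp [hpF c hcF]
    · exact Submodule.smul_mem _ _ (Submodule.subset_span (Set.mem_biUnion ⟨hcA, hcF⟩ hv))
  exact fun v hv => this hv

end

theorem span_eigenvectors_avoiding_finite_set_dense_general
    {X : Type*} [NormedAddCommGroup X] [NormedSpace ℂ X]
    (T : X →L[ℂ] X) (hhc : Hypercyclic T)
    (hspan : Dense
      (Submodule.span ℂ (⋃ c ∈ {c : ℂ | ‖c‖ = 1}, {x : X | T x = c • x}) : Set X))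
    (F : Set ℂ) (hFfin : F.Finite) :
    Dense
      (Submodule.span ℂ (⋃ c ∈ {c : ℂ | ‖c‖ = 1} \ F, {x : X | T x = c • x}) : Set X) := by
  let p : Polynomial ℂ := ∏ c ∈ hFfin.toFinset, (Polynomial.X - Polynomial.C c)
  have hp : p ≠ 0 :=
    (Polynomial.monic_prod_of_monic _ _ fun c _ => Polynomial.monic_X_sub_C c).ne_zero
  have hpF : ∀ c ∈ F, p.eval c = 0 := fun c hc => by
    rw [Polynomial.eval_prod]
    exact Finset.prod_eq_zero (hFfin.mem_toFinset.2 hc) (by simp)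
  exact ((hhc.denseRange_aeval hp).dense_image (ContinuousLinearMap.continuous _) hspan).mono
    (T.mapsTo_aeval_span_eigenvectors _ F hpF).image_subset

/-- If `T` is a bounded hypercyclic operator whose unimodular eigenvectors span a
dense subspace, then for every finite set `F` of unimodular eigenvalues of `T`, the
span of the eigenspaces associated to unimodular eigenvalues outside `F` is still
dense. -/
theorem span_eigenvectors_avoiding_finite_set_dense
    {X : Type*} [NormedAddCommGroup X] [NormedSpace ℂ X] [CompleteSpace X]
    [TopologicalSpace.SeparableSpace X] (hdim : ¬ FiniteDimensional ℂ X)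
    (T : X →L[ℂ] X) (hhc : Hypercyclic T)
    (hspan : Dense
      (Submodule.span ℂ (⋃ c ∈ {c : ℂ | ‖c‖ = 1}, {x : X | T x = c • x}) : Set X))
    (F : Set ℂ) (hFfin : F.Finite)
    (hFsub : F ⊆ {c : ℂ | ‖c‖ = 1 ∧ ∃ v : X, v ≠ 0 ∧ T v = c • v}) :
    Dense
      (Submodule.span ℂ (⋃ c ∈ {c : ℂ | ‖c‖ = 1} \ F, {x : X | T x = c • x}) : Set X) :=
  span_eigenvectors_avoiding_finite_set_dense_general T hhc hspan F hFfin
end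

section
/- Let X be a complex separable infinite-dimensional Banach space and let T be a bounded linear operator on X. Suppose there exists a Borel probability measure m on X which is invariant by T (i.e. m(T⁻¹(A)) = m(A) for every Borel set A) and such that m(HC(T)) = 1, where HC(T) is the set of hypercyclic vectors for T. Then m(FHC(T)) = 1, where FHC(T) is the set of frequently hypercyclic vectors for T; in particular T is frequently hypercyclic. -/
open MeasureTheory Filter Topology

/-! A filling-scheme (maximal ergodic) argument shows that if `f` preserves a finite measure `μ` and
`0 ≤ φ ≤ 1`, then `∫ φ ∂μ ≤ ε μ(X)` as soon as the lower Birkhoff averages of `φ` are almost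
everywhere below `ε`. Given an open set `U`, the set `E` of points whose orbits visit `U` with lower
density zero is invariant, so this applies to `μ` restricted to `E` and gives `μ (U ∩ E) = 0`. But
the orbit of a hypercyclic point of `E` stays in `E` and enters `U`, hence meets `U ∩ E`; as almost
every point is hypercyclic, `μ E = 0`. A countable basis of open sets finishes the proof. -/

section LiminfAdd

variable {ι : Type*} {l : Filter ι} [l.NeBot] {u v : ι → ℝ}

lemma liminf_eq_of_tendsto_sub (h : Tendsto (u - v) l (𝓝 0))
    (hv : IsBoundedUnder (· ≤ ·) l v) (hv' : IsBoundedUnder (· ≥ ·) l v) :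
    liminf u l = liminf v l := by
  have hu : u = (u - v) + v := by simp
  rw [hu]
  refine le_antisymm ?_ ?_
  · calc liminf ((u - v) + v) l ≤ limsup (u - v) l + liminf v l :=
          liminf_add_le h.isBoundedUnder_ge h.isBoundedUnder_le hv' hv.isCoboundedUnder_ge
      _ = liminf v l := by rw [h.limsup_eq, zero_add]
  · calc liminf v l = liminf (u - v) l + liminf v l := by rw [h.liminf_eq, zero_add]
      _ ≤ liminf ((u - v) + v) l :=
          le_liminf_add h.isBoundedUnder_ge h.isBoundedUnder_le hv' hv.isCoboundedUnder_ge

end LiminfAdd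

section BirkhoffUnitInterval

variable {α : Type*} {f : α → α} {φ : α → ℝ}

lemma Set.indicator_one_nonneg (U : Set α) (x : α) : (0 : ℝ) ≤ U.indicator 1 x :=
  Set.indicator_nonneg (fun _ _ => zero_le_one) x

lemma Set.indicator_one_le_one (U : Set α) (x : α) : U.indicator (1 : α → ℝ) x ≤ 1 :=
  Set.indicator_le_self' (fun _ _ => zero_le_one) x

lemma birkhoffSum_nonneg (h0 : ∀ x, 0 ≤ φ x) (n : ℕ) (x : α) : 0 ≤ birkhoffSum f φ n x :=
  Finset.sum_nonneg fun _ _ => h0 _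

lemma birkhoffSum_le_of_le_one (h1 : ∀ x, φ x ≤ 1) (n : ℕ) (x : α) :
    birkhoffSum f φ n x ≤ n := by
  simpa [birkhoffSum] using Finset.sum_le_sum fun k (_ : k ∈ Finset.range n) => h1 (f^[k] x)

lemma birkhoffAverage_mem_Icc (h0 : ∀ x, 0 ≤ φ x) (h1 : ∀ x, φ x ≤ 1) (n : ℕ) (x : α) :
    birkhoffAverage ℝ f φ n x ∈ Set.Icc 0 1 := by
  rw [birkhoffAverage, smul_eq_mul, ← div_eq_inv_mul]
  rcases n.eq_zero_or_pos with rfl | hn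
  · simp
  · have hn' : (0 : ℝ) < n := by exact_mod_cast hn
    exact ⟨div_nonneg (birkhoffSum_nonneg h0 n x) hn'.le,
      (div_le_one hn').2 (birkhoffSum_le_of_le_one h1 n x)⟩

lemma isBoundedUnder_le_birkhoffAverage (h0 : ∀ x, 0 ≤ φ x) (h1 : ∀ x, φ x ≤ 1) (x : α) :
    IsBoundedUnder (· ≤ ·) atTop (birkhoffAverage ℝ f φ · x) :=
  isBoundedUnder_of ⟨1, fun n => (birkhoffAverage_mem_Icc h0 h1 n x).2⟩

lemma isBoundedUnder_ge_birkhoffAverage (h0 : ∀ x, 0 ≤ φ x) (h1 : ∀ x, φ x ≤ 1) (x : α) :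
    IsBoundedUnder (· ≥ ·) atTop (birkhoffAverage ℝ f φ · x) :=
  isBoundedUnder_of ⟨0, fun n => (birkhoffAverage_mem_Icc h0 h1 n x).1⟩

lemma liminf_birkhoffAverage_apply (h0 : ∀ x, 0 ≤ φ x) (h1 : ∀ x, φ x ≤ 1) (x : α) :
    liminf (birkhoffAverage ℝ f φ · (f x)) atTop = liminf (birkhoffAverage ℝ f φ · x) atTop := by
  have hbdd : Bornology.IsBounded (Set.range φ) :=
    (Metric.isBounded_Icc (0 : ℝ) 1).subset (Set.range_subset_iff.2 fun x => ⟨h0 x, h1 x⟩)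
  exact liminf_eq_of_tendsto_sub
    (tendsto_birkhoffAverage_apply_sub_birkhoffAverage' ℝ hbdd f x)
    (isBoundedUnder_le_birkhoffAverage h0 h1 x) (isBoundedUnder_ge_birkhoffAverage h0 h1 x)

/-- Cut the orbit of `x` greedily: from a point outside `A` jump over a stretch of length at most
`M` on which the average of `φ` is at most `ε`, from a point of `A` advance by one step. -/
lemma birkhoffSum_le_of_forall_notMem_exists (h1 : ∀ x, φ x ≤ 1)
    {ε : ℝ} (hε : 0 ≤ ε) {M : ℕ} {A : Set α}
    (hA : ∀ x ∉ A, ∃ n, 1 ≤ n ∧ n ≤ M ∧ birkhoffSum f φ n x ≤ n * ε) (N : ℕ) (x : α) :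
    birkhoffSum f φ N x ≤ N * ε + birkhoffSum f (A.indicator 1) N x + M := by
  induction N using Nat.strong_induction_on generalizing x with
  | _ N ih =>
  by_cases hNM : N ≤ M
  · have : (N : ℝ) ≤ M := by exact_mod_cast hNM
    linarith [birkhoffSum_le_of_le_one (f := f) h1 N x,
      birkhoffSum_nonneg (f := f) A.indicator_one_nonneg N x, mul_nonneg (Nat.cast_nonneg N) hε]
  by_cases hxA : x ∈ A
  · obtain ⟨N, rfl⟩ : ∃ N', N = N' + 1 := ⟨N - 1, by omega⟩
    have := ih N (by omega) (f x)
    rw [birkhoffSum_succ', birkhoffSum_succ', Set.indicator_of_mem hxA, Pi.one_apply]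
    push_cast
    linarith [h1 x]
  · obtain ⟨n, hn1, hnM, hn⟩ := hA x hxA
    obtain ⟨k, rfl⟩ : ∃ k, N = n + k := ⟨N - n, by omega⟩
    have := ih k (by omega) (f^[n] x)
    rw [birkhoffSum_add, birkhoffSum_add]
    push_cast
    linarith [birkhoffSum_nonneg (f := f) A.indicator_one_nonneg n x]

end BirkhoffUnitInterval

section LowerDensity

variable {α : Type*} {f : α → α}

lemma lowerDensity_setOf_iterate_mem (U : Set α) (x : α) :
    lowerDensity {n | f^[n] x ∈ U} = liminf (birkhoffAverage ℝ f (U.indicator 1) · x) atTop := by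
  classical
  unfold lowerDensity
  congr 1
  funext N
  rw [birkhoffAverage, birkhoffSum, smul_eq_mul, ← div_eq_inv_mul, Finset.natCast_card_filter]
  simp [Set.indicator_apply]

lemma lowerDensity_setOf_iterate_mem_apply (U : Set α) (x : α) :
    lowerDensity {n | f^[n] (f x) ∈ U} = lowerDensity {n | f^[n] x ∈ U} := by
  simp only [lowerDensity_setOf_iterate_mem]
  exact liminf_birkhoffAverage_apply U.indicator_one_nonneg U.indicator_one_le_one x

lemma lowerDensity_setOf_iterate_mem_mono {U V : Set α} (h : U ⊆ V) (x : α) :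
    lowerDensity {n | f^[n] x ∈ U} ≤ lowerDensity {n | f^[n] x ∈ V} := by
  simp only [lowerDensity_setOf_iterate_mem]
  refine liminf_le_liminf (.of_forall fun n => ?_)
    (isBoundedUnder_ge_birkhoffAverage U.indicator_one_nonneg U.indicator_one_le_one x)
    (isBoundedUnder_le_birkhoffAverage V.indicator_one_nonneg V.indicator_one_le_one x
      ).isCoboundedUnder_ge
  exact smul_le_smul_of_nonneg_left (Finset.sum_le_sum fun k _ =>
    Set.indicator_le_indicator_of_subset h (fun _ => zero_le_one) _) (by positivity)

end LowerDensity

section Ergodic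

variable {α : Type*} [MeasurableSpace α] {μ : Measure α} {f : α → α}

lemma measurable_birkhoffSum {φ : α → ℝ} (hf : Measurable f) (hφ : Measurable φ) (n : ℕ) :
    Measurable (birkhoffSum f φ n) :=
  Finset.measurable_sum _ fun k _ => hφ.comp (hf.iterate k)

lemma measurable_birkhoffAverage {φ : α → ℝ} (hf : Measurable f) (hφ : Measurable φ) (n : ℕ) :
    Measurable (birkhoffAverage ℝ f φ n) :=
  (measurable_birkhoffSum hf hφ n).const_smul ((n : ℝ)⁻¹)

lemma integral_birkhoffSum {E : Type*} [NormedAddCommGroup E] [NormedSpace ℝ E] {φ : α → E}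
    (hf : MeasurePreserving f μ μ) (hφ : Integrable φ μ) (n : ℕ) :
    ∫ x, birkhoffSum f φ n x ∂μ = n • ∫ x, φ x ∂μ := by
  have hcomp : ∀ k, ∫ x, φ (f^[k] x) ∂μ = ∫ x, φ x ∂μ := fun k => by
    rw [← integral_map (hf.iterate k).aemeasurable
      (((hf.iterate k).map_eq).symm ▸ hφ.aestronglyMeasurable), (hf.iterate k).map_eq]
  simp only [birkhoffSum]
  rw [integral_finsetSum]
  · simp [hcomp]
  · exact fun k _ => ((hf.iterate k).integrable_comp hφ.aestronglyMeasurable).2 hφ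

variable [IsFiniteMeasure μ] {φ : α → ℝ}

lemma integral_le_of_forall_notMem_exists (hf : MeasurePreserving f μ μ) (hφ : Measurable φ)
    (h0 : ∀ x, 0 ≤ φ x) (h1 : ∀ x, φ x ≤ 1) {ε : ℝ} (hε : 0 ≤ ε) {M : ℕ} {A : Set α}
    (hAm : MeasurableSet A)
    (hA : ∀ x ∉ A, ∃ n, 1 ≤ n ∧ n ≤ M ∧ birkhoffSum f φ n x ≤ n * ε) :
    ∫ x, φ x ∂μ ≤ ε * μ.real Set.univ + μ.real A := by
  have hφi : Integrable φ μ :=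
    .of_bound hφ.aestronglyMeasurable 1 (.of_forall fun x => by
      rw [Real.norm_eq_abs, abs_le]; exact ⟨by linarith [h0 x], h1 x⟩)
  have hAi : Integrable (A.indicator (1 : α → ℝ)) μ := (integrable_const 1).indicator hAm
  have hbound : ∀ N : ℕ, 0 < N →
      ∫ x, φ x ∂μ ≤ ε * μ.real Set.univ + μ.real A + M * μ.real Set.univ / N := by
    intro N hN
    have hN' : (0 : ℝ) < N := by exact_mod_cast hN
    have hSi : ∀ ψ : α → ℝ, Integrable ψ μ → Integrable (birkhoffSum f ψ N) μ := fun ψ hψ =>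
      integrable_finsetSum _ fun k _ =>
        ((hf.iterate k).integrable_comp hψ.aestronglyMeasurable).2 hψ
    have hint : ∫ x, birkhoffSum f φ N x ∂μ
        ≤ ∫ x, (N * ε + birkhoffSum f (A.indicator 1) N x + M) ∂μ := integral_mono (hSi φ hφi)
      (((integrable_const _).add (hSi _ hAi)).add (integrable_const _))
      (birkhoffSum_le_of_forall_notMem_exists h1 hε hA N)
    rw [integral_add (f := fun x => (N : ℝ) * ε + birkhoffSum f (A.indicator 1) N x)
        ((integrable_const _).add (hSi _ hAi)) (integrable_const _),
      integral_add (integrable_const _) (hSi _ hAi), integral_birkhoffSum hf hφi,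
      integral_birkhoffSum hf hAi, integral_indicator_one hAm, integral_const, integral_const,
      nsmul_eq_mul, nsmul_eq_mul, smul_eq_mul, smul_eq_mul] at hint
    calc ∫ x, φ x ∂μ = (N * ∫ x, φ x ∂μ) / N := by field_simp
      _ ≤ (μ.real Set.univ * (N * ε) + N * μ.real A + μ.real Set.univ * M) / N := by gcongr
      _ = ε * μ.real Set.univ + μ.real A + M * μ.real Set.univ / N := by field_simp
  have hlim : Tendsto (fun N : ℕ => ε * μ.real Set.univ + μ.real A + M * μ.real Set.univ / N)
      atTop (𝓝 (ε * μ.real Set.univ + μ.real A)) := by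
    simpa using (tendsto_const_nhds (x := ε * μ.real Set.univ + μ.real A)).add
      ((tendsto_const_nhds (x := (M : ℝ) * μ.real Set.univ)).div_atTop
        tendsto_natCast_atTop_atTop)
  exact ge_of_tendsto hlim ((eventually_gt_atTop 0).mono hbound)

lemma integral_le_mul_of_ae_liminf_birkhoffAverage_lt (hf : MeasurePreserving f μ μ)
    (hφ : Measurable φ) (h0 : ∀ x, 0 ≤ φ x) (h1 : ∀ x, φ x ≤ 1) {ε : ℝ} (hε : 0 < ε)
    (h : ∀ᵐ x ∂μ, liminf (birkhoffAverage ℝ f φ · x) atTop < ε) :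
    ∫ x, φ x ∂μ ≤ ε * μ.real Set.univ := by
  set A : ℕ → Set α := fun M => {x | ∀ n, 1 ≤ n → n ≤ M → n * ε < birkhoffSum f φ n x}
  have hAm : ∀ M, MeasurableSet (A M) := fun M => by
    simp only [A, Set.ofPred_forall]
    exact .iInter fun n => .iInter fun _ => .iInter fun _ =>
      measurableSet_lt measurable_const (measurable_birkhoffSum hf.measurable hφ n)
  have hAanti : Antitone A := fun M M' hMM' x hx n hn hnM => hx n hn (hnM.trans hMM')
  have hInter : μ (⋂ M, A M) = 0 := by
    refine measure_mono_null (fun x hx => ?_) (ae_iff.1 h)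
    simp only [Set.mem_iInter] at hx
    refine not_lt.2 (le_liminf_of_le
      (isBoundedUnder_le_birkhoffAverage h0 h1 x).isCoboundedUnder_ge
      ((eventually_ge_atTop 1).mono fun n hn => ?_))
    have hn' : (0 : ℝ) < n := by exact_mod_cast hn
    rw [birkhoffAverage, smul_eq_mul, le_inv_mul_iff₀ hn']
    exact (hx n n hn le_rfl).le
  have hlim : Tendsto (fun M => μ.real (A M)) atTop (𝓝 0) := by
    have := tendsto_measure_iInter_atTop (fun M => (hAm M).nullMeasurableSet) hAanti
      ⟨0, measure_ne_top μ _⟩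
    rw [hInter] at this
    exact (ENNReal.tendsto_toReal ENNReal.zero_ne_top).comp this
  have hM : ∀ M, ∫ x, φ x ∂μ ≤ ε * μ.real Set.univ + μ.real (A M) := fun M =>
    integral_le_of_forall_notMem_exists hf hφ h0 h1 hε.le (hAm M) fun x hx => by
      simpa [A] using hx
  simpa using ge_of_tendsto (tendsto_const_nhds.add hlim) (.of_forall hM)

lemma integral_nonpos_of_ae_liminf_birkhoffAverage_nonpos (hf : MeasurePreserving f μ μ)
    (hφ : Measurable φ) (h0 : ∀ x, 0 ≤ φ x) (h1 : ∀ x, φ x ≤ 1)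
    (h : ∀ᵐ x ∂μ, liminf (birkhoffAverage ℝ f φ · x) atTop ≤ 0) :
    ∫ x, φ x ∂μ ≤ 0 := by
  refine le_of_forall_pos_le_add fun δ hδ => ?_
  have hc : 0 ≤ μ.real Set.univ := measureReal_nonneg
  have hε : 0 < δ / (μ.real Set.univ + 1) := by positivity
  calc ∫ x, φ x ∂μ ≤ δ / (μ.real Set.univ + 1) * μ.real Set.univ :=
        integral_le_mul_of_ae_liminf_birkhoffAverage_lt hf hφ h0 h1 hε
          (h.mono fun x hx => hx.trans_lt hε)
    _ ≤ 0 + δ := by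
        rw [zero_add, div_mul_eq_mul_div, div_le_iff₀ (by positivity)]
        nlinarith

end Ergodic

section Visits

variable {α : Type*} [MeasurableSpace α] {μ : Measure α} [IsFiniteMeasure μ] {f : α → α}

lemma ae_lowerDensity_pos_of_ae_exists_iterate_mem (hf : MeasurePreserving f μ μ) {U : Set α}
    (hU : MeasurableSet U) (h : ∀ᵐ x ∂μ, ∃ n, f^[n] x ∈ U) :
    ∀ᵐ x ∂μ, 0 < lowerDensity {n | f^[n] x ∈ U} := by
  have hφ : Measurable (U.indicator (1 : α → ℝ)) := measurable_const.indicator hU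
  set E := {x | lowerDensity {n | f^[n] x ∈ U} ≤ 0}
  have hEm : MeasurableSet E := by
    simp only [E, lowerDensity_setOf_iterate_mem]
    exact measurableSet_le (Measurable.liminf fun n =>
      measurable_birkhoffAverage hf.measurable hφ n) measurable_const
  have hfE : f ⁻¹' E = E := Set.ext fun x => by
    change lowerDensity {n | f^[n] (f x) ∈ U} ≤ 0 ↔ _
    rw [lowerDensity_setOf_iterate_mem_apply]
    rfl
  have hUE : μ (U ∩ E) = 0 := by
    have hfE' : MeasurePreserving f (μ.restrict E) (μ.restrict E) := by
      simpa only [hfE] using hf.restrict_preimage hEm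
    have := integral_nonpos_of_ae_liminf_birkhoffAverage_nonpos hfE' hφ
      U.indicator_one_nonneg U.indicator_one_le_one
      ((ae_restrict_mem hEm).mono fun x hx => by rwa [← lowerDensity_setOf_iterate_mem])
    rw [integral_indicator_one hU, measureReal_restrict_apply hU] at this
    exact (measureReal_eq_zero_iff).1 (le_antisymm this measureReal_nonneg)
  have hnull : ∀ᵐ x ∂μ, ∀ n, f^[n] x ∉ U ∩ E :=
    ae_all_iff.2 fun n => measure_eq_zero_iff_ae_notMem.1 ((hf.iterate n).preimage_null hUE)
  have hmaps : Set.MapsTo f E E := fun x hx => by rwa [← hfE] at hx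
  filter_upwards [h, hnull] with x ⟨n, hn⟩ hx
  by_contra hle
  exact hx n ⟨hn, hmaps.iterate n (not_lt.1 hle)⟩

lemma ae_forall_isOpen_lowerDensity_pos [TopologicalSpace α] [SecondCountableTopology α]
    [OpensMeasurableSpace α] (hf : MeasurePreserving f μ μ)
    (h : ∀ U : Set α, IsOpen U → U.Nonempty → ∀ᵐ x ∂μ, ∃ n, f^[n] x ∈ U) :
    ∀ᵐ x ∂μ, ∀ U : Set α, IsOpen U → U.Nonempty → 0 < lowerDensity {n | f^[n] x ∈ U} := by
  obtain ⟨B, hBc, hBne, hB⟩ := TopologicalSpace.exists_countable_basis α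
  have hBpos : ∀ᵐ x ∂μ, ∀ V ∈ B, 0 < lowerDensity {n | f^[n] x ∈ V} :=
    (ae_ball_iff hBc).2 fun V hV =>
      ae_lowerDensity_pos_of_ae_exists_iterate_mem hf (hB.isOpen hV).measurableSet
        (h V (hB.isOpen hV) (Set.nonempty_iff_ne_empty.2 (ne_of_mem_of_not_mem hV hBne)))
  filter_upwards [hBpos] with x hx U hU ⟨u, hu⟩
  obtain ⟨V, hV, -, hVU⟩ := hB.exists_subset_of_mem_open hu hU
  exact (hx V hV).trans_le (lowerDensity_setOf_iterate_mem_mono hVU x)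

end Visits

theorem invariant_measure_full_on_HC_implies_full_on_FHC_general
    {X : Type*} [NormedAddCommGroup X] [NormedSpace ℂ X]
    [TopologicalSpace.SeparableSpace X] [MeasurableSpace X] [BorelSpace X]
    (T : X →L[ℂ] X) (m : Measure X) [IsProbabilityMeasure m]
    (hinv : ∀ A : Set X, MeasurableSet A → m (T ⁻¹' A) = m A)
    (hHC : m {x : X | Dense (Set.range fun n : ℕ => (T ^ n) x)} = 1) :
    m {x : X | FreqHCVector T x} = 1 ∧ FrequentlyHypercyclic T := by
  have hT : MeasurePreserving T m m :=
    ⟨T.continuous.measurable, Measure.ext fun A hA => by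
      rw [Measure.map_apply T.continuous.measurable hA, hinv A hA]⟩
  have hvisit : ∀ U : Set X, IsOpen U → U.Nonempty → ∀ᵐ x ∂m, ∃ n, T^[n] x ∈ U := by
    intro U hU hne
    have hW : MeasurableSet {x | ∃ n, T^[n] x ∈ U} := by
      simp only [Set.ofPred_exists]
      exact .iUnion fun n => hU.measurableSet.preimage (hT.iterate n).measurable
    have hHW : {x : X | Dense (Set.range fun n : ℕ => (T ^ n) x)} ⊆ {x | ∃ n, T^[n] x ∈ U} :=
      fun x hx => by simpa [FunLike.coe_pow_eq_iterate] using hx.exists_mem_open hU hne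
    exact mem_ae_iff.2 ((prob_compl_eq_zero_iff hW).2
      (le_antisymm prob_le_one (hHC ▸ measure_mono hHW)))
  have hFHC : ∀ᵐ x ∂m, FreqHCVector T x :=
    (ae_forall_isOpen_lowerDensity_pos hT hvisit).mono fun x hx U hU hne => by
      simpa [FunLike.coe_pow_eq_iterate] using hx U hU hne
  exact ⟨(measure_congr (ae_eq_univ.2 (ae_iff.1 hFHC))).trans measure_univ, hFHC.exists⟩

/-- If there is a `T`-invariant Borel probability measure `m` on `X` giving full
measure to the set of hypercyclic vectors of `T`, then `m` gives full measure to the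
set of frequently hypercyclic vectors of `T`; in particular `T` is frequently
hypercyclic. -/
theorem invariant_measure_full_on_HC_implies_full_on_FHC
    {X : Type*} [NormedAddCommGroup X] [NormedSpace ℂ X] [CompleteSpace X]
    [TopologicalSpace.SeparableSpace X] [MeasurableSpace X] [BorelSpace X]
    (hdim : ¬ FiniteDimensional ℂ X)
    (T : X →L[ℂ] X) (m : Measure X) [IsProbabilityMeasure m]
    (hinv : ∀ A : Set X, MeasurableSet A → m (T ⁻¹' A) = m A)
    (hHC : m {x : X | Dense (Set.range fun n : ℕ => (T ^ n) x)} = 1) :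
    m {x : X | FreqHCVector T x} = 1 ∧ FrequentlyHypercyclic T :=
  invariant_measure_full_on_HC_implies_full_on_FHC_general T m hinv hHC
end

section
/- Let X be a complex separable infinite-dimensional Banach space, T a bounded linear operator on X, (Ω,𝓕,ℙ) a probability space, and (χ_n)_{n≥1} a sequence of independent random variables on Ω each uniformly distributed on the unit circle 𝕋 = {λ ∈ ℂ : |λ| = 1} (Steinhaus variables). Let (y_n)_{n≥1} be a sequence in X with T y_n = λ_n y_n and |λ_n| = 1 for every n, and suppose the random series Φ(ω) = Σ_{n≥1} χ_n(ω) y_n converges for almost every ω ∈ Ω. Then the image measure m on X defined by m(A) = ℙ({ω : Σ_{n≥1} χ_n(ω) y_n ∈ A}) for Borel sets A is invariant by T, i.e. m(T⁻¹(A)) = m(A) for every Borel set A. -/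
/-!
Since `T yₙ = λₙ yₙ`, applying `T` to a partial sum of the series amounts to replacing each `χₙ`
by `λₙ χₙ`. Rotations preserve the Steinhaus law, so by independence the sequence `(λₙ χₙ)` has the
same joint law as `(χₙ)`, and `T` maps every partial sum to a random vector with the same law.
Almost sure convergence implies convergence in distribution, and limits in distribution are
unique, so `T ∘ Φ` and `Φ` have the same law.
-/

open MeasureTheory Filter Topology

/-- The law of a Steinhaus variable: the uniform probability distribution on the
unit circle of `ℂ`, i.e. the image of the normalized Lebesgue measure on
`(0, 2π]` under `θ ↦ exp (i θ)`. -/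
noncomputable def steinhausLaw : Measure ℂ :=
  Measure.map (fun θ : ℝ => Complex.exp (θ * Complex.I))
    ((ENNReal.ofReal (2 * Real.pi))⁻¹ • volume.restrict (Set.Ioc 0 (2 * Real.pi)))

local instance : Fact (0 < 2 * Real.pi) := ⟨Real.two_pi_pos⟩

-- On the additive circle a rotation becomes a translation, which preserves Haar measure.
lemma steinhausLaw_eq_map_toCircle :
    steinhausLaw = Measure.map (fun θ : AddCircle (2 * Real.pi) => (θ.toCircle : ℂ))
      ((ENNReal.ofReal (2 * Real.pi))⁻¹ • volume) := by
  have hexp : (fun θ : ℝ => Complex.exp (θ * Complex.I))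
      = (fun θ : AddCircle (2 * Real.pi) => (θ.toCircle : ℂ)) ∘ (↑) := by
    funext θ
    simp [AddCircle.toCircle_apply_mk, Circle.coe_exp]
  rw [Measure.map_smul, ← (AddCircle.measurePreserving_mk (2 * Real.pi) 0).map_eq,
    Measure.map_map (by fun_prop) (by fun_prop), zero_add, ← hexp, steinhausLaw, Measure.map_smul]

lemma steinhausLaw_map_const_mul {c : ℂ} (hc : ‖c‖ = 1) :
    Measure.map (c * ·) steinhausLaw = steinhausLaw := by
  have hc' : (AddCircle.toCircle (c.arg : AddCircle (2 * Real.pi)) : ℂ) = c := by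
    simpa [AddCircle.toCircle_apply_mk, Circle.coe_exp, hc] using Complex.norm_mul_exp_arg_mul_I c
  have hrot : (c * ·) ∘ (fun θ : AddCircle (2 * Real.pi) => (θ.toCircle : ℂ))
      = (fun θ : AddCircle (2 * Real.pi) => (θ.toCircle : ℂ)) ∘
          ((c.arg : AddCircle (2 * Real.pi)) + ·) := by
    funext θ
    simp only [Function.comp_apply, AddCircle.toCircle_add, Circle.coe_mul, hc']
  rw [steinhausLaw_eq_map_toCircle, Measure.map_map (by fun_prop) (by fun_prop), hrot,
    ← Measure.map_map (by fun_prop) (measurable_const_add _), Measure.map_smul,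
    map_add_left_eq_self]

lemma map_fun_const_mul_eq_of_steinhaus {ι Ω : Type*} [MeasurableSpace Ω] {μ : Measure Ω}
    {χ : ι → Ω → ℂ} (hmeas : ∀ i, Measurable (χ i)) (hindep : ProbabilityTheory.iIndepFun χ μ)
    (hlaw : ∀ i, Measure.map (χ i) μ = steinhausLaw) {c : ι → ℂ} (hc : ∀ i, ‖c i‖ = 1) :
    Measure.map (fun ω i => c i * χ i ω) μ = Measure.map (fun ω i => χ i ω) μ := by
  have hindep' : ProbabilityTheory.iIndepFun (fun i ω => c i * χ i ω) μ :=
    hindep.comp (fun i z => c i * z) fun i => measurable_const_mul _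
  rw [hindep'.map_fun_eq_infinitePi_map fun i => (hmeas i).const_mul _,
    hindep.map_fun_eq_infinitePi_map hmeas]
  congr 1
  funext i
  rw [hlaw, ← steinhausLaw_map_const_mul (hc i), ← hlaw,
    Measure.map_map (measurable_const_mul _) (hmeas i)]
  rfl

lemma map_eq_map_of_ae_tendsto_of_map_eq {Ω E : Type*} [MeasurableSpace Ω] {μ : Measure Ω}
    [IsProbabilityMeasure μ] [TopologicalSpace E] [HasOuterApproxClosed E] [MeasurableSpace E]
    [BorelSpace E] {F G : ℕ → Ω → E} {Φ Ψ : Ω → E}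
    (hF : ∀ n, AEMeasurable (F n) μ) (hG : ∀ n, AEMeasurable (G n) μ)
    (hΦ : AEMeasurable Φ μ) (hΨ : AEMeasurable Ψ μ)
    (hFΦ : ∀ᵐ ω ∂μ, Tendsto (F · ω) atTop (𝓝 (Φ ω)))
    (hGΨ : ∀ᵐ ω ∂μ, Tendsto (G · ω) atTop (𝓝 (Ψ ω)))
    (hFG : ∀ n, μ.map (F n) = μ.map (G n)) :
    μ.map Φ = μ.map Ψ := by
  have hG' := (tendstoInDistribution_of_ae_tendsto hG hΨ hGΨ).tendsto
  refine tendstoInDistribution_unique F (tendstoInDistribution_of_ae_tendsto hF hΦ hFΦ)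
    ⟨hF, hΨ, ?_⟩
  simpa only [hFG] using hG'

theorem steinhaus_series_distribution_invariant_general
    {X : Type*} [NormedAddCommGroup X] [NormedSpace ℂ X]
    [MeasurableSpace X] [BorelSpace X]
    (T : X →L[ℂ] X)
    {Ω : Type*} [MeasurableSpace Ω] (ℙ : Measure Ω) [IsProbabilityMeasure ℙ]
    (χ : ℕ → Ω → ℂ) (hmeas : ∀ n, Measurable (χ n))
    (hindep : ProbabilityTheory.iIndepFun χ ℙ)
    (hlaw : ∀ n, Measure.map (χ n) ℙ = steinhausLaw)
    (y : ℕ → X) (lam : ℕ → ℂ)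
    (heig : ∀ n, T (y n) = lam n • y n) (hmod : ∀ n, ‖lam n‖ = 1)
    (Φ : Ω → X) (hΦmeas : Measurable Φ)
    (hΦ : ∀ᵐ ω ∂ℙ, Tendsto (fun N : ℕ => ∑ n ∈ Finset.range N, χ n ω • y n)
      atTop (𝓝 (Φ ω))) :
    ∀ A : Set X, MeasurableSet A →
      Measure.map Φ ℙ (T ⁻¹' A) = Measure.map Φ ℙ A := by
  intro A hA
  let S : ℕ → (ℕ → ℂ) → X := fun N z => ∑ n ∈ Finset.range N, z n • y n
  have hS : ∀ N, Measurable (S N) := fun N => by fun_prop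
  have hTS : ∀ N z, T (S N z) = S N (fun n => lam n * z n) := fun N z => by
    simp [S, map_sum, heig, smul_smul, mul_comm]
  have hχ : Measurable fun ω n => χ n ω := measurable_pi_lambda _ hmeas
  have hlamχ : Measurable fun ω n => lam n * χ n ω :=
    measurable_pi_lambda _ fun n => (hmeas n).const_mul _
  have hinv : ℙ.map (T ∘ Φ) = ℙ.map Φ := by
    refine map_eq_map_of_ae_tendsto_of_map_eq (F := fun N ω => T (S N (χ · ω)))
      (G := fun N ω => S N (χ · ω)) (fun N => by fun_prop) (fun N => by fun_prop) (by fun_prop)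
      hΦmeas.aemeasurable ?_ hΦ fun N => ?_
    · filter_upwards [hΦ] with ω hω using (T.continuous.tendsto _).comp hω
    · have hrot := congrArg (Measure.map (S N))
        (map_fun_const_mul_eq_of_steinhaus hmeas hindep hlaw hmod)
      rw [Measure.map_map (hS N) hlamχ, Measure.map_map (hS N) hχ] at hrot
      simpa only [hTS, Function.comp_def] using hrot
  rw [← Measure.map_apply T.measurable hA, Measure.map_map T.measurable hΦmeas, hinv]

/-- If `(χ n)` is a sequence of independent Steinhaus variables, `(y n)` a sequence
of eigenvectors of `T` with unimodular eigenvalues such that the random series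
`Φ ω = ∑ χ n ω • y n` converges almost surely, then the distribution `m` of `Φ` is
`T`-invariant: `m (T ⁻¹' A) = m A` for every Borel set `A`. -/
theorem steinhaus_series_distribution_invariant
    {X : Type*} [NormedAddCommGroup X] [NormedSpace ℂ X] [CompleteSpace X]
    [TopologicalSpace.SeparableSpace X] [MeasurableSpace X] [BorelSpace X]
    (hdim : ¬ FiniteDimensional ℂ X) (T : X →L[ℂ] X)
    {Ω : Type*} [MeasurableSpace Ω] (ℙ : Measure Ω) [IsProbabilityMeasure ℙ]
    (χ : ℕ → Ω → ℂ) (hmeas : ∀ n, Measurable (χ n))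
    (hindep : ProbabilityTheory.iIndepFun χ ℙ)
    (hlaw : ∀ n, Measure.map (χ n) ℙ = steinhausLaw)
    (y : ℕ → X) (lam : ℕ → ℂ)
    (heig : ∀ n, T (y n) = lam n • y n) (hmod : ∀ n, ‖lam n‖ = 1)
    (Φ : Ω → X) (hΦmeas : Measurable Φ)
    (hΦ : ∀ᵐ ω ∂ℙ, Tendsto (fun N : ℕ => ∑ n ∈ Finset.range N, χ n ω • y n)
      atTop (𝓝 (Φ ω))) :
    ∀ A : Set X, MeasurableSet A →
      Measure.map Φ ℙ (T ⁻¹' A) = Measure.map Φ ℙ A :=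
  steinhaus_series_distribution_invariant_general T ℙ χ hmeas hindep hlaw y lam heig hmod Φ hΦmeas
    hΦ
end

section
/- Let X be a complex separable infinite-dimensional Banach space and let T be a bounded linear operator on X. The following assertions are equivalent: (1) for every countable subset D of the unit circle 𝕋, the linear span of ⋃_{λ ∈ 𝕋∖D} ker(T − λ) is dense in X; (2) T has a perfectly spanning set of eigenvectors associated to unimodular eigenvalues; (3) there exists a sequence (K_i)_{i≥1} of subsets of 𝕋, each homeomorphic to the Cantor set 2^ω, and a sequence (E_i)_{i≥1} of continuous functions E_i : K_i → S_X into the unit sphere S_X = {x ∈ X : ‖x‖ = 1}, such that T E_i(λ) = λ E_i(λ) for every i ≥ 1 and λ ∈ K_i, and the linear span of {E_i(λ) : i ≥ 1, λ ∈ K_i} is dense in X. -/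
/-!
A countable set of eigenvalues is null for an atomless measure, which gives (2) ⇒ (1).

For (3) ⇒ (2), push an atomless Haar measure of full support on the Cantor group `ℕ → Bool`
to each `Kᵢ` and average these measures: a set of full measure then meets each `Kᵢ` in a dense
subset, so by continuity of `Eᵢ` its eigenvectors approximate all of `Eᵢ '' Kᵢ`.

For (1) ⇒ (3), consider the closed set of unimodular unit eigenpairs `(c, x)` in `ℂ × X`.
Fix a countable basis and discard every eigenvalue of a pair lying in a basic open set whose
pairs carry only countably many eigenvalues. Only countably many eigenvalues are discarded, so
by (1) the remaining pairs `Z` still span, and each of them is a limit of pairs of `Z` with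
other eigenvalues. A Cantor scheme of closed balls centred in `Z`, in which sibling balls carry
disjoint sets of eigenvalues, then produces near any point of `Z` a continuous map from
`ℕ → Bool` to eigenpairs that is injective in the eigenvalue, that is, a continuous eigenvector
field on a Cantor set of eigenvalues; countably many of them approximate all of `Z`.
-/

open MeasureTheory Filter Topology

open scoped ENNReal
open Set

theorem dense_span_of_subset_closure_span {𝕜 E : Type*} [Semiring 𝕜] [TopologicalSpace E]
    [AddCommMonoid E] [Module 𝕜 E] [ContinuousAdd E] [ContinuousConstSMul 𝕜 E] {s t : Set E}
    (hs : Dense (Submodule.span 𝕜 s : Set E)) (hst : s ⊆ closure (Submodule.span 𝕜 t)) :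
    Dense (Submodule.span 𝕜 t : Set E) := by
  refine Dense.of_closure (hs.mono ?_)
  rw [← Submodule.topologicalClosure_coe]
  exact Submodule.span_le.2 (by rwa [Submodule.topologicalClosure_coe])

theorem Set.Nonempty.of_dense_span {𝕜 E : Type*} [Semiring 𝕜] [TopologicalSpace E] [T1Space E]
    [Nontrivial E] [AddCommMonoid E] [Module 𝕜 E] {s : Set E}
    (hs : Dense (Submodule.span 𝕜 s : Set E)) : s.Nonempty := by
  rw [nonempty_iff_ne_empty]
  rintro rfl
  simp [dense_iff_closure_eq] at hs

theorem exists_isProbabilityMeasure_nat_bool :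
    ∃ ν : Measure (ℕ → Bool), IsProbabilityMeasure ν ∧ NullSingletonClass ν ∧
      ν.IsOpenPosMeasure := by
  -- a Haar measure has no atoms as soon as `0` is not isolated
  have : (𝓝[≠] (0 : ℕ → Bool)).NeBot := by
    rw [← mem_closure_iff_nhdsWithin_neBot]
    refine mem_closure_of_tendsto (f := fun n i => decide (i = n)) (b := atTop) ?_ ?_
    · refine tendsto_pi_nhds.2 fun i => tendsto_const_nhds.congr' ?_
      filter_upwards [eventually_ne_atTop i] with n hn
      exact (decide_eq_false (Ne.symm hn)).symm
    · exact Eventually.of_forall fun n h => by simpa using congrFun h n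
  refine ⟨Measure.addHaarMeasure ⊤, ⟨?_⟩, inferInstance, inferInstance⟩
  rw [← TopologicalSpace.PositiveCompacts.coe_top]
  exact Measure.addHaarMeasure_self

theorem exists_isProbabilityMeasure_null_iff {α : Type*} [MeasurableSpace α]
    (μ : ℕ → Measure α) [∀ i, IsProbabilityMeasure (μ i)] :
    ∃ σ : Measure α, IsProbabilityMeasure σ ∧ ∀ s, σ s = 0 ↔ ∀ i, μ i s = 0 := by
  refine ⟨Measure.sum fun i => (2⁻¹ : ℝ≥0∞) ^ (i + 1) • μ i, ⟨?_⟩, fun s => ?_⟩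
  · simp [Measure.sum_apply _ MeasurableSet.univ, ENNReal.tsum_geometric_add_one,
      ENNReal.inv_mul_cancel]
  · simp [Measure.sum_apply_eq_zero]

theorem exists_isProbabilityMeasure_of_homeomorph_nat_bool {α : Type*} [TopologicalSpace α]
    [T2Space α] [MeasurableSpace α] [BorelSpace α] {K : Set α}
    (hK : Nonempty (K ≃ₜ (ℕ → Bool))) :
    ∃ μ : Measure α, IsProbabilityMeasure μ ∧ NullSingletonClass μ ∧ μ Kᶜ = 0 ∧
      ∀ B, μ Bᶜ = 0 → K ⊆ closure (B ∩ K) := by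
  obtain ⟨e⟩ := hK
  obtain ⟨ν, hν, hνatom, hνpos⟩ := exists_isProbabilityMeasure_nat_bool
  set g : (ℕ → Bool) → α := (↑) ∘ e.symm
  have hg_cont : Continuous g := continuous_subtype_val.comp e.symm.continuous
  have hg : MeasurableEmbedding g :=
    (hg_cont.isClosedEmbedding (Subtype.val_injective.comp e.symm.injective)).measurableEmbedding
  have hrange : range g = K := by simp [g, range_comp]
  refine ⟨ν.map g, Measure.isProbabilityMeasure_map hg.measurable.aemeasurable,
    ⟨fun c => ?_⟩, ?_, fun B hB => ?_⟩
  · rw [hg.map_apply]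
    exact (subsingleton_singleton.preimage hg.injective).measure_zero ν
  · rw [hg.map_apply, ← hrange, preimage_compl, preimage_range, compl_univ, measure_empty]
  · rw [hg.map_apply] at hB
    have hdense : Dense (g ⁻¹' B) := Measure.dense_of_ae (μ := ν) (ae_iff.2 hB)
    rw [← hrange]
    rintro _ ⟨x, rfl⟩
    exact map_mem_closure hg_cont (hdense x) fun y hy => ⟨hy, mem_range_self y⟩

section CantorMaps

open Metric PiNat CantorScheme

theorem exists_countable_forall_mem_closure_diff_fiber {Y M : Type*} [TopologicalSpace Y]
    [SecondCountableTopology Y] (f : Y → M) (Z : Set Y) :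
    ∃ D : Set M, D.Countable ∧ ∀ p ∈ Z ∩ f ⁻¹' Dᶜ,
      p ∈ closure ((Z ∩ f ⁻¹' Dᶜ) \ f ⁻¹' {f p}) := by
  obtain ⟨B, hBc, -, hB⟩ := TopologicalSpace.exists_countable_basis Y
  set D := ⋃ W ∈ {W ∈ B | (f '' (W ∩ Z)).Countable}, f '' (W ∩ Z)
  have hD : D.Countable := (hBc.mono (sep_subset _ _)).biUnion fun W hW => hW.2
  refine ⟨D, hD, fun p ⟨hpZ, hpD⟩ => mem_closure_iff_nhds.2 fun U hU => ?_⟩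
  obtain ⟨W, hWB, hpW, hWU⟩ := hB.mem_nhds_iff.1 hU
  have hW : ¬ (f '' (W ∩ Z)).Countable := fun hW =>
    hpD (mem_biUnion ⟨hWB, hW⟩ (mem_image_of_mem f ⟨hpW, hpZ⟩))
  obtain ⟨_, ⟨q, ⟨hqW, hqZ⟩, rfl⟩, hq⟩ : (f '' (W ∩ Z) \ (D ∪ {f p})).Nonempty :=
    sdiff_nonempty.2 fun h => hW ((hD.union (countable_singleton _)).mono h)
  simp only [mem_union, not_or] at hq
  exact ⟨q, hWU hqW, ⟨hqZ, hq.1⟩, hq.2⟩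

theorem injective_of_forall_mem_res {α : Type*} {A : List Bool → Set α} {g : (ℕ → Bool) → α}
    (hg : ∀ x n, g x ∈ A (res x n)) (hA : ∀ l, Disjoint (A (false :: l)) (A (true :: l))) :
    Function.Injective g := by
  intro x y hxy
  by_contra hne
  set n := firstDiff x y
  have hy : g x ∈ A (y n :: res x n) := by
    rw [hxy, show res x n = res y n from res_eq_res.2 fun m hm => apply_eq_of_lt_firstDiff hm,
      ← res_succ]
    exact hg y (n + 1)
  have hx : g x ∈ A (x n :: res x n) := res_succ x n ▸ hg x (n + 1)
  have hxy_ne : x n ≠ y n := apply_firstDiff_ne hne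
  generalize x n = a at hx hxy_ne
  generalize y n = b at hy hxy_ne
  cases a <;> cases b
  · exact hxy_ne rfl
  · exact disjoint_left.1 (hA _) hx hy
  · exact disjoint_left.1 (hA _) hy hx
  · exact hxy_ne rfl

variable {Y : Type*} [MetricSpace Y]

theorem exists_continuous_forall_mem_closedBall_res [CompleteSpace Y] {c : List Bool → Y}
    {r : List Bool → ℝ} (hr : ∀ l, 0 < r l) (hr_succ : ∀ l b, r (b :: l) ≤ r l / 2)
    (hsub : ∀ l b, closedBall (c (b :: l)) (r (b :: l)) ⊆ closedBall (c l) (r l)) :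
    ∃ φ : (ℕ → Bool) → Y, Continuous φ ∧ (∀ x n, φ x ∈ closedBall (c (res x n)) (r (res x n))) ∧
      ∀ x, Tendsto (fun n => c (res x n)) atTop (𝓝 (φ x)) := by
  set A : List Bool → Set Y := fun l => closedBall (c l) (r l)
  have hr_res : ∀ x n, r (res x n) ≤ r [] * (1 / 2) ^ n := by
    intro x n
    induction n with
    | zero => simp
    | succ n ih =>
      rw [res_succ, pow_succ]
      linarith [hr_succ (res x n) (x n)]
  have hlim : Tendsto (fun n : ℕ => r [] * (1 / 2) ^ n) atTop (𝓝 0) := by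
    simpa using (tendsto_pow_atTop_nhds_zero_of_lt_one (by norm_num : (0 : ℝ) ≤ 1 / 2)
      (by norm_num)).const_mul (r [])
  have hlim2 : Tendsto (fun n : ℕ => 2 * (r [] * (1 / 2) ^ n)) atTop (𝓝 0) := by
    simpa using hlim.const_mul 2
  have hdiam : VanishingDiam A := by
    intro x
    refine tendsto_of_tendsto_of_tendsto_of_le_of_le tendsto_const_nhds
      (ENNReal.ofReal_zero ▸ ENNReal.tendsto_ofReal hlim2)
      (fun _ => zero_le) fun n => ediam_le_of_forall_dist_le fun y hy z hz => ?_
    linarith [dist_triangle_right y z (c (res x n)), mem_closedBall.1 hy, mem_closedBall.1 hz,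
      hr_res x n]
  have hanti : ClosureAntitone A :=
    CantorScheme.Antitone.closureAntitone hsub fun _ => isClosed_closedBall
  have hdom : (inducedMap A).1 = univ :=
    hanti.map_of_vanishingDiam hdiam fun l => ⟨_, mem_closedBall_self (hr l).le⟩
  refine ⟨fun x => (inducedMap A).2 ⟨x, hdom ▸ mem_univ x⟩,
    hdiam.map_continuous.comp (by fun_prop), fun x n => map_mem _ n, fun x => ?_⟩
  refine tendsto_iff_dist_tendsto_zero.2 (squeeze_zero (fun _ => dist_nonneg) (fun n => ?_) hlim)
  exact (dist_comm _ _).trans_le ((mem_closedBall.1 (map_mem _ n)).trans (hr_res x n))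

variable {M : Type*} [MetricSpace M] {f : Y → M} {Z : Set Y}

theorem exists_closedBall_subset_disjoint_image (hf : Continuous f)
    (hZ : ∀ p ∈ Z, p ∈ closure (Z \ f ⁻¹' {f p})) {p : Y} (hp : p ∈ Z) {r : ℝ} (hr : 0 < r) :
    ∃ q ∈ Z, ∃ ρ > 0, ρ ≤ r / 2 ∧ closedBall q ρ ⊆ closedBall p r ∧
      Disjoint (f '' closedBall p ρ) (f '' closedBall q ρ) := by
  obtain ⟨q, ⟨hqZ, hqp⟩, hpq⟩ := Metric.mem_closure_iff.1 (hZ p hp) (r / 2) (half_pos hr)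
  have hd : 0 < dist (f p) (f q) := dist_pos.2 (Ne.symm hqp)
  have hsmall : ∀ x, ∃ s > 0, f '' closedBall x s ⊆ ball (f x) (dist (f p) (f q) / 2) := by
    intro x
    obtain ⟨s, hs, hx⟩ := (nhds_basis_closedBall.tendsto_iff nhds_basis_ball).1
      hf.continuousAt _ (half_pos hd)
    exact ⟨s, hs, image_subset_iff.2 hx⟩
  obtain ⟨s, hs, hps⟩ := hsmall p
  obtain ⟨t, ht, hqt⟩ := hsmall q
  refine ⟨q, hqZ, min (r / 4) (min s t), by positivity, by linarith [min_le_left (r / 4) (min s t)],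
    closedBall_subset_closedBall' ?_, ?_⟩
  · rw [dist_comm]
    linarith [min_le_left (r / 4) (min s t)]
  · refine (ball_disjoint_ball (by linarith)).mono
      ((image_mono (closedBall_subset_closedBall ?_)).trans hps)
      ((image_mono (closedBall_subset_closedBall ?_)).trans hqt)
    · exact (min_le_right _ _).trans (min_le_left _ _)
    · exact (min_le_right _ _).trans (min_le_right _ _)

theorem exists_nat_bool_map_injective_comp [CompleteSpace Y] (hf : Continuous f)
    (hZ : ∀ p ∈ Z, p ∈ closure (Z \ f ⁻¹' {f p})) {p₀ : Y} (hp₀ : p₀ ∈ Z) {ε : ℝ}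
    (hε : 0 < ε) :
    ∃ φ : (ℕ → Bool) → Y, Continuous φ ∧ Function.Injective (f ∘ φ) ∧ range φ ⊆ closure Z ∧
      ∀ x, dist (φ x) p₀ < ε := by
  choose! q hqZ ρ hρ hρr hq hdisj using
    fun p (hp : p ∈ Z) r (hr : 0 < r) => exists_closedBall_subset_disjoint_image hf hZ hp hr
  -- each word `l` labels a closed ball with centre in `Z`; its child `false :: l` keeps the
  -- centre and its child `true :: l` moves it to `q`
  let node : List Bool → Y × ℝ :=
    List.foldr (fun b n => (bif b then q n.1 n.2 else n.1, ρ n.1 n.2)) (p₀, ε / 2)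
  have hnode : ∀ l, (node l).1 ∈ Z ∧ 0 < (node l).2 := by
    intro l
    induction l with
    | nil => exact ⟨hp₀, half_pos hε⟩
    | cons b l ih => cases b <;> exact ⟨by simp [node, ih.1, hqZ _ ih.1 _ ih.2], hρ _ ih.1 _ ih.2⟩
  have hsub : ∀ l b, closedBall (node (b :: l)).1 (node (b :: l)).2 ⊆
      closedBall (node l).1 (node l).2 := by
    intro l b
    obtain ⟨hl, hr⟩ := hnode l
    cases b
    · exact closedBall_subset_closedBall (show ρ _ _ ≤ (node l).2 by linarith [hρr _ hl _ hr])
    · exact hq _ hl _ hr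
  obtain ⟨φ, hφ, hφA, hφlim⟩ := exists_continuous_forall_mem_closedBall_res
    (c := fun l => (node l).1) (r := fun l => (node l).2) (fun l => (hnode l).2)
    (fun l b => hρr _ (hnode l).1 _ (hnode l).2) hsub
  refine ⟨φ, hφ, injective_of_forall_mem_res (A := fun l => f '' closedBall (node l).1 (node l).2)
      (fun x n => mem_image_of_mem f (hφA x n)) fun l => hdisj _ (hnode l).1 _ (hnode l).2,
    ?_, fun x => ?_⟩
  · rintro _ ⟨x, rfl⟩
    exact mem_closure_of_tendsto (hφlim x) (Eventually.of_forall fun n => (hnode _).1)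
  · have : dist (φ x) p₀ ≤ ε / 2 := hφA x 0
    linarith

theorem exists_seq_nat_bool_map_injective_comp [CompleteSpace Y]
    [TopologicalSpace.SeparableSpace Y] (hf : Continuous f)
    (hZ : ∀ p ∈ Z, p ∈ closure (Z \ f ⁻¹' {f p})) (hne : Z.Nonempty) :
    ∃ φ : ℕ → (ℕ → Bool) → Y,
      (∀ i, Continuous (φ i) ∧ Function.Injective (f ∘ φ i) ∧ range (φ i) ⊆ closure Z) ∧
      Z ⊆ closure (⋃ i, range (φ i)) := by
  have : Nonempty Z := hne.to_subtype
  obtain ⟨u, hu⟩ := TopologicalSpace.exists_dense_seq Z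
  choose φ hφ hinj hrange hdist using fun i : ℕ × ℕ =>
    exists_nat_bool_map_injective_comp hf hZ (u i.1).2 (Nat.one_div_pos_of_nat (n := i.2))
  refine ⟨fun i => φ (Nat.unpair i), fun i => ⟨hφ _, hinj _, hrange _⟩, ?_⟩
  have hu_mem : ∀ n, (u n : Y) ∈ closure (⋃ i, range (φ (Nat.unpair i))) := by
    intro n
    refine Metric.mem_closure_iff.2 fun δ hδ => ?_
    obtain ⟨j, hj⟩ := exists_nat_one_div_lt hδ
    refine ⟨φ (n, j) default, mem_iUnion.2 ⟨Nat.pair n j, by simp⟩, ?_⟩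
    rw [dist_comm]
    exact (hdist (n, j) default).trans hj
  intro p hp
  have hp' : p ∈ closure (range fun n => (u n : Y)) :=
    map_mem_closure continuous_subtype_val (hu ⟨p, hp⟩) fun _ ⟨n, hn⟩ => ⟨n, hn ▸ rfl⟩
  exact closure_minimal (range_subset_iff.2 hu_mem) isClosed_closure hp'

end CantorMaps

section Eigenvectors

variable {X : Type*} [NormedAddCommGroup X] [NormedSpace ℂ X] (T : X →L[ℂ] X)

structure IsCantorEigenfield (K : Set ℂ) (E : ℂ → X) : Prop where
  subset_unitCircle : K ⊆ {c : ℂ | ‖c‖ = 1}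
  nonempty_homeomorph : Nonempty (K ≃ₜ (ℕ → Bool))
  continuousOn : ContinuousOn E K
  norm_eq_one : ∀ c ∈ K, ‖E c‖ = 1
  apply_eq_smul : ∀ c ∈ K, T (E c) = c • E c

variable {T} in
theorem PerfectlySpanning.dense_span_eigenvectors_diff_countable (h : PerfectlySpanning T)
    {D : Set ℂ} (hD : D.Countable) :
    Dense (Submodule.span ℂ
      (⋃ c ∈ {c : ℂ | ‖c‖ = 1} \ D, {x : X | T x = c • x}) : Set X) := by
  obtain ⟨σ, -, hatom, hcircle, hspan⟩ := h
  have : NullSingletonClass σ := ⟨hatom⟩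
  refine hspan _ sdiff_subset ((measurableSet_eq_fun measurable_norm measurable_const).diff
    hD.measurableSet) ?_
  rw [measure_sdiff_null (hD.measure_zero σ), hcircle]

theorem perfectlySpanning_of_isCantorEigenfield {K : ℕ → Set ℂ} {E : ℕ → ℂ → X}
    (hKE : ∀ i, IsCantorEigenfield T (K i) (E i))
    (hdense : Dense (Submodule.span ℂ (⋃ i, E i '' K i) : Set X)) :
    PerfectlySpanning T := by
  choose μ hμ hμatom hμK hμdense using fun i =>
    exists_isProbabilityMeasure_of_homeomorph_nat_bool (hKE i).nonempty_homeomorph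
  obtain ⟨σ, hσ, hσnull⟩ := exists_isProbabilityMeasure_null_iff μ
  have hcircle : MeasurableSet {c : ℂ | ‖c‖ = 1} :=
    measurableSet_eq_fun measurable_norm measurable_const
  refine ⟨σ, hσ, fun c => (hσnull _).2 fun i => (hμatom i).measure_singleton c,
    (prob_compl_eq_zero_iff hcircle).1 ((hσnull _).2 fun i =>
      measure_mono_null (compl_subset_compl.2 (hKE i).subset_unitCircle) (hμK i)),
    fun A _ hA hA1 => dense_span_of_subset_closure_span hdense ?_⟩
  have hAc : ∀ i, μ i Aᶜ = 0 := (hσnull _).1 ((prob_compl_eq_zero_iff hA).2 hA1)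
  simp only [iUnion_subset_iff, image_subset_iff]
  intro i c hc
  have hEc : E i c ∈ closure (E i '' (A ∩ K i)) :=
    (((hKE i).continuousOn c hc).mono inter_subset_right).mem_closure_image (hμdense i A (hAc i) hc)
  refine closure_mono ?_ hEc
  rintro _ ⟨c', ⟨hc'A, hc'K⟩, rfl⟩
  exact Submodule.subset_span (mem_iUnion₂.2 ⟨c', hc'A, (hKE i).apply_eq_smul c' hc'K⟩)

def unitEigenpairs : Set (ℂ × X) :=
  {p | ‖p.1‖ = 1 ∧ ‖p.2‖ = 1 ∧ T p.2 = p.1 • p.2}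

theorem isClosed_unitEigenpairs : IsClosed (unitEigenpairs T) :=
  (isClosed_eq (by fun_prop) continuous_const).inter
    ((isClosed_eq (by fun_prop) continuous_const).inter (isClosed_eq (by fun_prop) (by fun_prop)))

theorem eigenvectors_subset_span_unitEigenpairs (D : Set ℂ) :
    (⋃ c ∈ {c : ℂ | ‖c‖ = 1} \ D, {x : X | T x = c • x}) ⊆
      Submodule.span ℂ (Prod.snd '' (unitEigenpairs T ∩ Prod.fst ⁻¹' Dᶜ)) := by
  simp only [iUnion_subset_iff]
  rintro c ⟨hc, hcD⟩ x (hx : T x = c • x)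
  rcases eq_or_ne x 0 with rfl | hx0
  · exact zero_mem _
  rw [← smul_inv_smul₀ (Complex.ofReal_ne_zero.2 (norm_ne_zero_iff.2 hx0)) x]
  refine Submodule.smul_mem _ _ (Submodule.subset_span
    ⟨(c, (‖x‖ : ℂ)⁻¹ • x), ⟨⟨hc, norm_smul_inv_norm hx0, ?_⟩, hcD⟩, rfl⟩)
  rw [map_smul, hx, smul_comm]

theorem exists_isCantorEigenfield_of_nat_bool_map {φ : (ℕ → Bool) → ℂ × X} (hφ : Continuous φ)
    (hinj : Function.Injective (Prod.fst ∘ φ)) (hφT : range φ ⊆ unitEigenpairs T) :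
    ∃ E : ℂ → X, IsCantorEigenfield T (range (Prod.fst ∘ φ)) E ∧
      E '' range (Prod.fst ∘ φ) = range (Prod.snd ∘ φ) := by
  set e := ((continuous_fst.comp hφ).isClosedEmbedding hinj).isEmbedding.toHomeomorph
  have hE : ∀ x, Function.extend (Prod.fst ∘ φ) (Prod.snd ∘ φ) 0 (φ x).1 = (φ x).2 :=
    fun x => hinj.extend_apply _ _ x
  refine ⟨Function.extend (Prod.fst ∘ φ) (Prod.snd ∘ φ) 0, ⟨?_, ⟨e.symm⟩, ?_, ?_, ?_⟩, ?_⟩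
  · rintro _ ⟨x, rfl⟩
    exact (hφT ⟨x, rfl⟩).1
  · rw [continuousOn_iff_continuous_domRestrict]
    convert (continuous_snd.comp hφ).comp e.symm.continuous using 1
    funext z
    obtain ⟨x, rfl⟩ := e.surjective z
    simp [e, hE]
  · rintro _ ⟨x, rfl⟩
    simpa [hE] using (hφT ⟨x, rfl⟩).2.1
  · rintro _ ⟨x, rfl⟩
    simpa [hE] using (hφT ⟨x, rfl⟩).2.2
  · rw [← range_comp]
    exact congrArg range (Function.extend_comp hinj _ _)

theorem exists_isCantorEigenfield [CompleteSpace X] [TopologicalSpace.SeparableSpace X]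
    [Nontrivial X] (h : ∀ D : Set ℂ, D.Countable →
      Dense (Submodule.span ℂ (⋃ c ∈ {c : ℂ | ‖c‖ = 1} \ D, {x : X | T x = c • x}) : Set X)) :
    ∃ (K : ℕ → Set ℂ) (E : ℕ → ℂ → X), (∀ i, IsCantorEigenfield T (K i) (E i)) ∧
      Dense (Submodule.span ℂ (⋃ i, E i '' K i) : Set X) := by
  have : SecondCountableTopology X := UniformSpace.secondCountable_of_separable X
  obtain ⟨D, hD, hZ⟩ := exists_countable_forall_mem_closure_diff_fiber Prod.fst (unitEigenpairs T)
  set Z := unitEigenpairs T ∩ Prod.fst ⁻¹' Dᶜ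
  have hZ_dense : Dense (Submodule.span ℂ (Prod.snd '' Z) : Set X) :=
    dense_span_of_subset_closure_span (h D hD)
      ((eigenvectors_subset_span_unitEigenpairs T D).trans subset_closure)
  obtain ⟨φ, hφ, hZφ⟩ := exists_seq_nat_bool_map_injective_comp continuous_fst hZ
    (Set.Nonempty.of_dense_span hZ_dense).of_image
  have hφT : ∀ i, range (φ i) ⊆ unitEigenpairs T := fun i =>
    (hφ i).2.2.trans (closure_minimal inter_subset_left (isClosed_unitEigenpairs T))
  choose E hE hEK using fun i =>
    exists_isCantorEigenfield_of_nat_bool_map T (hφ i).1 (hφ i).2.1 (hφT i)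
  refine ⟨fun i => range (Prod.fst ∘ φ i), E, hE, dense_span_of_subset_closure_span hZ_dense ?_⟩
  calc Prod.snd '' Z ⊆ Prod.snd '' closure (⋃ i, range (φ i)) := image_mono hZφ
    _ ⊆ closure (Prod.snd '' ⋃ i, range (φ i)) := image_closure_subset_closure_image continuous_snd
    _ = closure (⋃ i, E i '' range (Prod.fst ∘ φ i)) := by simp_rw [hEK, image_iUnion, range_comp]
    _ ⊆ closure (Submodule.span ℂ (⋃ i, E i '' range (Prod.fst ∘ φ i))) :=
      closure_mono Submodule.subset_span

end Eigenvectors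

/-- Characterizations of operators with perfectly spanning unimodular eigenvectors:
(1) removing any countable set of unimodular eigenvalues leaves a spanning set of
eigenvectors; (2) perfect spanning; (3) the unimodular eigenvectors can be
parametrized by countably many continuous eigenvector fields defined on Cantor
subsets of the circle. -/
theorem perfectlySpanning_characterizations
    {X : Type*} [NormedAddCommGroup X] [NormedSpace ℂ X] [CompleteSpace X]
    [TopologicalSpace.SeparableSpace X] (hdim : ¬ FiniteDimensional ℂ X)
    (T : X →L[ℂ] X) :
    ((∀ D : Set ℂ, D.Countable →
        Dense (Submodule.span ℂ
          (⋃ c ∈ {c : ℂ | ‖c‖ = 1} \ D, {x : X | T x = c • x}) : Set X)) ↔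
      PerfectlySpanning T) ∧
    (PerfectlySpanning T ↔
      ∃ (K : ℕ → Set ℂ) (E : ℕ → ℂ → X),
        (∀ i, K i ⊆ {c : ℂ | ‖c‖ = 1}) ∧
        (∀ i, Nonempty (K i ≃ₜ (ℕ → Bool))) ∧
        (∀ i, ContinuousOn (E i) (K i)) ∧
        (∀ i, ∀ c ∈ K i, ‖E i c‖ = 1) ∧
        (∀ i, ∀ c ∈ K i, T (E i c) = c • E i c) ∧
        Dense (Submodule.span ℂ (⋃ i, E i '' K i) : Set X)) := by
  have : Nontrivial X := not_subsingleton_iff_nontrivial.1 fun _ => hdim inferInstance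
  have h21 (h2 : PerfectlySpanning T) (D : Set ℂ) (hD : D.Countable) :=
    h2.dense_span_eigenvectors_diff_countable hD
  refine ⟨⟨fun h1 => ?_, h21⟩, fun h2 => ?_, ?_⟩
  · obtain ⟨K, E, hKE, hdense⟩ := exists_isCantorEigenfield T h1
    exact perfectlySpanning_of_isCantorEigenfield T hKE hdense
  · obtain ⟨K, E, hKE, hdense⟩ := exists_isCantorEigenfield T (h21 h2)
    exact ⟨K, E, fun i => (hKE i).subset_unitCircle, fun i => (hKE i).nonempty_homeomorph,
      fun i => (hKE i).continuousOn, fun i => (hKE i).norm_eq_one, fun i => (hKE i).apply_eq_smul,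
      hdense⟩
  · rintro ⟨K, E, hK, hhomeo, hcont, hnorm, heig, hdense⟩
    exact perfectlySpanning_of_isCantorEigenfield T
      (fun i => ⟨hK i, hhomeo i, hcont i, hnorm i, heig i⟩) hdense
end
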